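/- Let F² = x₃ y₁ √(y₂² + y₃²) on the region x₃ y₁ > 0, y₂² + y₃² > 0 of ℝ³ × ℝ³. Then the spray coefficients Gⁱ = (1/4) gⁱˡ(∂²F²/∂yˡ∂xᵐ yᵐ - ∂F²/∂xˡ), where g_{ij} = (1/2)∂²F²/∂yⁱ∂yʲ, yield nonlinear connection coefficients Γⁱⱼ = ∂Gⁱ/∂yʲ whose only nonvanishing components are Γ²₂ = y₃/x₃, Γ²₃ = y₂/x₃, Γ³₂ = -y₂/x₃, Γ³₃ = y₃/x₃. -/

import Mathlib

noncomputable section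

/-- The energy function F² = x₃ y₁ √(y₂² + y₃²) on ℝ³ × ℝ³ (0-based indices). -/
def F2 (p : (Fin 3 → ℝ) × (Fin 3 → ℝ)) : ℝ :=
  p.1 2 * p.2 0 * Real.sqrt ((p.2 1) ^ 2 + (p.2 2) ^ 2)

/-- Partial derivative in the base (x) direction m. -/
def pdx (m : Fin 3) (f : (Fin 3 → ℝ) × (Fin 3 → ℝ) → ℝ)
    (p : (Fin 3 → ℝ) × (Fin 3 → ℝ)) : ℝ :=
  fderiv ℝ f p (Pi.single m 1, 0)

/-- Partial derivative in the fibre (y) direction l. -/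
def pdy (l : Fin 3) (f : (Fin 3 → ℝ) × (Fin 3 → ℝ) → ℝ)
    (p : (Fin 3 → ℝ) × (Fin 3 → ℝ)) : ℝ :=
  fderiv ℝ f p (0, Pi.single l 1)

/-- The Finsler metric tensor g_{ij} = (1/2) ∂²F²/∂yⁱ∂yʲ. -/
def gMat (p : (Fin 3 → ℝ) × (Fin 3 → ℝ)) : Matrix (Fin 3) (Fin 3) ℝ :=
  Matrix.of fun i j => (1 / 2) * pdy i (pdy j F2) p

/-- The spray coefficients Gⁱ = (1/4) gⁱˡ (∂²F²/∂yˡ∂xᵐ yᵐ - ∂F²/∂xˡ). -/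
def sprayG (i : Fin 3) (p : (Fin 3 → ℝ) × (Fin 3 → ℝ)) : ℝ :=
  (1 / 4) * ∑ l, (gMat p)⁻¹ i l *
    ((∑ m, pdx m (pdy l F2) p * p.2 m) - pdx l F2 p)

/-- The Barthel (nonlinear) connection coefficients Γⁱⱼ = ∂Gⁱ/∂yʲ. -/
def Gamma (i j : Fin 3) (p : (Fin 3 → ℝ) × (Fin 3 → ℝ)) : ℝ :=
  pdy j (sprayG i) p

/-! Write F² = x₃ φ(y) with φ(y) = y₁ √(y₂² + y₃²). Then g = (x₃/2) Hess φ, whose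
determinant -x₃³ y₁ / (8 √(y₂² + y₃²)) does not vanish, and the right-hand side of the spray
equation is y₃ ∇φ - φ e₃. Rather than inverting g, one checks that
G = (0, y₂y₃/x₃, (y₃² - y₂²)/(2x₃)) solves g (4G) = rhs. This holds on the whole open domain,
so Γ is the y-derivative of this closed form. -/

open Filter Topology Matrix

namespace BarthelExample

abbrev E := (Fin 3 → ℝ) × (Fin 3 → ℝ)

def coordX (m : Fin 3) : E →L[ℝ] ℝ :=
  (ContinuousLinearMap.proj m).comp (ContinuousLinearMap.fst ℝ _ _)

def coordY (m : Fin 3) : E →L[ℝ] ℝ :=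
  (ContinuousLinearMap.proj m).comp (ContinuousLinearMap.snd ℝ _ _)

@[simp] lemma coordX_apply (m : Fin 3) (v : E) : coordX m v = v.1 m := rfl

@[simp] lemma coordY_apply (m : Fin 3) (v : E) : coordY m v = v.2 m := rfl

section PartialDerivatives

variable {f g : E → ℝ} {f' : E →L[ℝ] ℝ} {p : E}

lemma pdx_eq_of_hasFDerivAt (h : HasFDerivAt f f' p) (m : Fin 3) :
    pdx m f p = f' (Pi.single m 1, 0) := by
  rw [pdx, h.fderiv]

lemma pdy_eq_of_hasFDerivAt (h : HasFDerivAt f f' p) (l : Fin 3) :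
    pdy l f p = f' (0, Pi.single l 1) := by
  rw [pdy, h.fderiv]

lemma pdy_congr (h : f =ᶠ[𝓝 p] g) (l : Fin 3) : pdy l f p = pdy l g p := by
  rw [pdy, pdy, h.fderiv_eq]

end PartialDerivatives

def yNorm (q : E) : ℝ := √(q.2 1 ^ 2 + q.2 2 ^ 2)

def phi (q : E) : ℝ := q.2 0 * yNorm q

def gradPhi (q : E) : Fin 3 → ℝ :=
  ![yNorm q, q.2 0 * q.2 1 / yNorm q, q.2 0 * q.2 2 / yNorm q]

def hessPhi (q : E) : Matrix (Fin 3) (Fin 3) ℝ :=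
  !![0, q.2 1 / yNorm q, q.2 2 / yNorm q;
     q.2 1 / yNorm q, q.2 0 * q.2 2 ^ 2 / yNorm q ^ 3, -(q.2 0 * q.2 1 * q.2 2) / yNorm q ^ 3;
     q.2 2 / yNorm q, -(q.2 0 * q.2 1 * q.2 2) / yNorm q ^ 3, q.2 0 * q.2 1 ^ 2 / yNorm q ^ 3]

section Derivatives

variable {q : E} (hq : 0 < q.2 1 ^ 2 + q.2 2 ^ 2)
include hq

lemma yNorm_pos : 0 < yNorm q := Real.sqrt_pos.2 hq

lemma yNorm_sq : yNorm q ^ 2 = q.2 1 ^ 2 + q.2 2 ^ 2 := Real.sq_sqrt hq.le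

lemma hasFDerivAt_yNorm :
    HasFDerivAt yNorm ((yNorm q)⁻¹ • (q.2 1 • coordY 1 + q.2 2 • coordY 2)) q := by
  have hsq : HasFDerivAt (fun q : E => q.2 1 ^ 2 + q.2 2 ^ 2)
      ((2 * q.2 1) • coordY 1 + (2 * q.2 2) • coordY 2) q := by
    exact (((coordY 1).hasFDerivAt (x := q)).pow 2 |>.add
      (((coordY 2).hasFDerivAt (x := q)).pow 2)).congr_fderiv (by simp [nsmul_eq_mul])
  refine ((Real.hasDerivAt_sqrt hq.ne').comp_hasFDerivAt q hsq).congr_fderiv ?_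
  refine ContinuousLinearMap.ext fun x => ?_
  have hr := (yNorm_pos hq).ne'
  simp only [yNorm] at hr ⊢
  simp
  field_simp

lemma hasFDerivAt_yNorm_inv :
    HasFDerivAt (fun q => (yNorm q)⁻¹)
      (-(yNorm q ^ 3)⁻¹ • (q.2 1 • coordY 1 + q.2 2 • coordY 2)) q := by
  refine ((hasDerivAt_inv (yNorm_pos hq).ne').comp_hasFDerivAt q
    (hasFDerivAt_yNorm hq)).congr_fderiv ?_
  rw [smul_smul]
  congr 1
  field_simp

lemma hasFDerivAt_mul_div_yNorm (k : Fin 3) :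
    HasFDerivAt (fun q : E => q.2 0 * q.2 k / yNorm q)
      ((yNorm q)⁻¹ • (q.2 0 • coordY k + q.2 k • coordY 0)
        - (q.2 0 * q.2 k / yNorm q ^ 3) • (q.2 1 • coordY 1 + q.2 2 • coordY 2)) q := by
  simp only [div_eq_mul_inv]
  refine (((coordY 0).hasFDerivAt.mul (coordY k).hasFDerivAt).mul
    (hasFDerivAt_yNorm_inv hq)).congr_fderiv ?_
  refine ContinuousLinearMap.ext fun x => ?_
  simp
  ring

lemma hasFDerivAt_phi : HasFDerivAt phi (∑ i, gradPhi q i • coordY i) q := by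
  refine ((coordY 0).hasFDerivAt.mul (hasFDerivAt_yNorm hq)).congr_fderiv ?_
  refine ContinuousLinearMap.ext fun x => ?_
  simp [Fin.sum_univ_three, gradPhi]
  ring

lemma hasFDerivAt_gradPhi (l : Fin 3) :
    HasFDerivAt (fun q => gradPhi q l) (∑ i, hessPhi q l i • coordY i) q := by
  have hr := (yNorm_pos hq).ne'
  fin_cases l
  · refine (hasFDerivAt_yNorm hq).congr_fderiv (ContinuousLinearMap.ext fun x => ?_)
    simp [Fin.sum_univ_three, hessPhi]
    ring
  · refine (hasFDerivAt_mul_div_yNorm hq 1).congr_fderiv (ContinuousLinearMap.ext fun x => ?_)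
    simp [Fin.sum_univ_three, hessPhi]
    field_simp
    linear_combination q.2 0 * x.2 1 * yNorm_sq hq
  · refine (hasFDerivAt_mul_div_yNorm hq 2).congr_fderiv (ContinuousLinearMap.ext fun x => ?_)
    simp [Fin.sum_univ_three, hessPhi]
    field_simp
    linear_combination q.2 0 * x.2 2 * yNorm_sq hq

end Derivatives

lemma F2_eq_mul_phi : F2 = fun q => q.1 2 * phi q :=
  funext fun _ => mul_assoc _ _ _

section SecondDerivatives

variable {q : E} (hq : 0 < q.2 1 ^ 2 + q.2 2 ^ 2)
include hq

lemma hasFDerivAt_F2 :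
    HasFDerivAt F2 (q.1 2 • ∑ i, gradPhi q i • coordY i + phi q • coordX 2) q := by
  rw [F2_eq_mul_phi]
  exact (coordX 2).hasFDerivAt.mul (hasFDerivAt_phi hq)

lemma pdy_F2 (l : Fin 3) : pdy l F2 q = q.1 2 * gradPhi q l := by
  simp [pdy_eq_of_hasFDerivAt (hasFDerivAt_F2 hq), Pi.single_apply]

lemma pdx_F2 (m : Fin 3) : pdx m F2 q = (Pi.single 2 (phi q) : Fin 3 → ℝ) m := by
  simp [pdx_eq_of_hasFDerivAt (hasFDerivAt_F2 hq), Pi.single_apply, eq_comm]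

lemma hasFDerivAt_pdy_F2 (l : Fin 3) :
    HasFDerivAt (pdy l F2)
      (q.1 2 • ∑ i, hessPhi q l i • coordY i + gradPhi q l • coordX 2) q := by
  have hnear : ∀ᶠ q' : E in 𝓝 q, 0 < q'.2 1 ^ 2 + q'.2 2 ^ 2 :=
    ((by fun_prop : Continuous fun q : E => q.2 1 ^ 2 + q.2 2 ^ 2).tendsto q).eventually_const_lt hq
  exact ((coordX 2).hasFDerivAt.mul (hasFDerivAt_gradPhi hq l)).congr_of_eventuallyEq
    (hnear.mono fun q' hq' => pdy_F2 hq' l)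

lemma pdy_pdy_F2 (i l : Fin 3) : pdy i (pdy l F2) q = q.1 2 * hessPhi q l i := by
  simp [pdy_eq_of_hasFDerivAt (hasFDerivAt_pdy_F2 hq l), Pi.single_apply]

lemma pdx_pdy_F2 (m l : Fin 3) :
    pdx m (pdy l F2) q = (Pi.single 2 (gradPhi q l) : Fin 3 → ℝ) m := by
  simp [pdx_eq_of_hasFDerivAt (hasFDerivAt_pdy_F2 hq l), Pi.single_apply, eq_comm]

end SecondDerivatives

def sprayRhs (q : E) : Fin 3 → ℝ :=
  fun l => (∑ m, pdx m (pdy l F2) q * q.2 m) - pdx l F2 q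

def sprayVec (q : E) : Fin 3 → ℝ :=
  ![0, q.2 1 * q.2 2 / q.1 2, (q.2 2 ^ 2 - q.2 1 ^ 2) / (2 * q.1 2)]

lemma sprayG_eq_inv_mulVec (i : Fin 3) (q : E) :
    sprayG i q = (1 / 4) * ((gMat q)⁻¹ *ᵥ sprayRhs q) i := rfl

lemma hessPhi_isSymm (q : E) : (hessPhi q).IsSymm :=
  Matrix.IsSymm.ext fun i j => by fin_cases i <;> fin_cases j <;> rfl

section Spray

variable {q : E} (hq : 0 < q.2 1 ^ 2 + q.2 2 ^ 2)
include hq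

lemma gMat_eq : gMat q = (q.1 2 / 2) • hessPhi q := by
  ext i j
  simp [gMat, pdy_pdy_F2 hq, (hessPhi_isSymm q).apply i j]
  ring

lemma sprayRhs_eq : sprayRhs q = q.2 2 • gradPhi q - Pi.single 2 (phi q) := by
  ext l
  simp [sprayRhs, pdx_pdy_F2 hq, pdx_F2 hq, Pi.single_apply]
  ring

lemma det_gMat : (gMat q).det = -(q.1 2 ^ 3 * q.2 0 / (8 * yNorm q)) := by
  have hr := (yNorm_pos hq).ne'
  rw [gMat_eq hq, det_smul, det_fin_three]
  simp [hessPhi]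
  field_simp
  linear_combination 8 * q.1 2 ^ 3 * q.2 0 * (yNorm q ^ 2 + q.2 1 ^ 2 + q.2 2 ^ 2) * yNorm_sq hq

lemma gMat_mulVec_sprayVec (ha : q.1 2 ≠ 0) : gMat q *ᵥ (4 • sprayVec q) = sprayRhs q := by
  have hr := (yNorm_pos hq).ne'
  rw [gMat_eq hq, sprayRhs_eq hq]
  ext l
  fin_cases l <;> simp [mulVec, dotProduct, Fin.sum_univ_three, hessPhi, sprayVec, gradPhi, phi] <;>
    field_simp
  · linear_combination -4 * q.2 2 * yNorm_sq hq
  · linear_combination -4 * q.2 0 * q.2 1 * q.2 2 * yNorm_sq hq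
  · linear_combination 4 * q.2 0 * (yNorm q ^ 2 + q.2 1 ^ 2) * yNorm_sq hq

lemma sprayG_eq (ha : q.1 2 ≠ 0) (hb : q.2 0 ≠ 0) (i : Fin 3) : sprayG i q = sprayVec q i := by
  have hdet : IsUnit (gMat q).det := by
    rw [det_gMat hq]
    simp [ha, hb, (yNorm_pos hq).ne']
  have hsolve : (gMat q)⁻¹ *ᵥ sprayRhs q = 4 • sprayVec q := by
    rw [← gMat_mulVec_sprayVec hq ha, mulVec_mulVec, nonsing_inv_mul _ hdet, one_mulVec]
  rw [sprayG_eq_inv_mulVec, hsolve]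
  simp

end Spray

def finslerDomain : Set E := {q | 0 < q.1 2 * q.2 0 ∧ 0 < q.2 1 ^ 2 + q.2 2 ^ 2}

lemma isOpen_finslerDomain : IsOpen finslerDomain :=
  (isOpen_lt continuous_const (by fun_prop : Continuous fun q : E => q.1 2 * q.2 0)).inter
    (isOpen_lt continuous_const (by fun_prop : Continuous fun q : E => q.2 1 ^ 2 + q.2 2 ^ 2))

lemma sprayG_eventuallyEq {p : E} (hp : p ∈ finslerDomain) (i : Fin 3) :
    sprayG i =ᶠ[𝓝 p] fun q => sprayVec q i :=
  eventually_of_mem (isOpen_finslerDomain.mem_nhds hp) fun _ ⟨hab, hq⟩ =>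
    sprayG_eq hq (left_ne_zero_of_mul hab.ne') (right_ne_zero_of_mul hab.ne') i

def barthelCoeff (p : E) : Fin 3 → Fin 3 → ℝ :=
  ![![0, 0, 0],
    ![0, p.2 2 / p.1 2, p.2 1 / p.1 2],
    ![0, -(p.2 1) / p.1 2, p.2 2 / p.1 2]]

lemma hasFDerivAt_sprayVec {p : E} (ha : p.1 2 ≠ 0) (i : Fin 3) :
    HasFDerivAt (fun q => sprayVec q i)
      (∑ j, barthelCoeff p i j • coordY j - (sprayVec p i / p.1 2) • coordX 2) p := by
  have hinv : HasFDerivAt (fun q : E => (q.1 2)⁻¹) (-(p.1 2 ^ 2)⁻¹ • coordX 2) p :=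
    (hasDerivAt_inv ha).comp_hasFDerivAt p (coordX 2).hasFDerivAt
  fin_cases i
  · refine (hasFDerivAt_const 0 p).congr_fderiv (ContinuousLinearMap.ext fun x => ?_)
    simp [Fin.sum_univ_three, sprayVec, barthelCoeff]
  · simp only [sprayVec, div_eq_mul_inv]
    refine (((coordY 1).hasFDerivAt.mul (coordY 2).hasFDerivAt).mul hinv).congr_fderiv
      (ContinuousLinearMap.ext fun x => ?_)
    simp [Fin.sum_univ_three, barthelCoeff]
    field_simp
    ring
  · have hquad := ((coordY 2).hasFDerivAt (x := p) |>.pow 2).fun_sub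
      ((coordY 1).hasFDerivAt.pow 2)
    refine ((hquad.mul hinv).const_mul 2⁻¹ |>.congr_of_eventuallyEq
      (Eventually.of_forall fun q => ?_)).congr_fderiv (ContinuousLinearMap.ext fun x => ?_)
    · simp [sprayVec]
      ring
    simp [Fin.sum_univ_three, barthelCoeff, sprayVec]
    field_simp
    ring

end BarthelExample

open BarthelExample

/-- the only nonvanishing Barthel connection coefficients of
F = √(x₃ y₁ √(y₂² + y₃²)) are Γ²₂ = y₃/x₃, Γ²₃ = y₂/x₃, Γ³₂ = -y₂/x₃,
Γ³₃ = y₃/x₃ (1-based indexing; below 0-based). -/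
theorem stmt_8 (p : (Fin 3 → ℝ) × (Fin 3 → ℝ))
    (h1 : p.1 2 * p.2 0 > 0) (h2 : (p.2 1) ^ 2 + (p.2 2) ^ 2 > 0) :
    ∀ i j : Fin 3, Gamma i j p =
      ![![0, 0, 0],
        ![0, p.2 2 / p.1 2, p.2 1 / p.1 2],
        ![0, -(p.2 1) / p.1 2, p.2 2 / p.1 2]] i j := by
  intro i j
  have hp : p ∈ finslerDomain := ⟨h1, h2⟩
  rw [Gamma, pdy_congr (sprayG_eventuallyEq hp i),
    pdy_eq_of_hasFDerivAt (hasFDerivAt_sprayVec (left_ne_zero_of_mul h1.ne') i)]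
  simp [Pi.single_apply, barthelCoeff]
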